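/- An element v of the group algebra ℚ[Z_n²] satisfies A · v = v for every A ∈ SL₂(ℤ) if and only if v lies in the ℚ-linear span of the elements {T_k : k | n}. -/

import Mathlib

noncomputable section

/-- The action of a matrix `A ∈ SL₂(ℤ)` on `Z_n² = ZMod n × ZMod n`, given by
reducing the matrix modulo `n` and multiplying vectors. -/
def sl2Hom (n : ℕ) (A : Matrix.SpecialLinearGroup (Fin 2) ℤ) :
    (ZMod n × ZMod n) →+ (ZMod n × ZMod n) where
  toFun x := (((A.1 0 0 : ℤ) : ZMod n) * x.1 + ((A.1 0 1 : ℤ) : ZMod n) * x.2,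
              ((A.1 1 0 : ℤ) : ZMod n) * x.1 + ((A.1 1 1 : ℤ) : ZMod n) * x.2)
  map_zero' := by simp
  map_add' x y := by
    simp only [Prod.fst_add, Prod.snd_add, Prod.mk_add_mk, Prod.mk.injEq]
    constructor <;> ring

/-- `T_K := |K|⁻¹ • ∑_{θ ∈ K} (θ)` in the group algebra `ℚ[Z_n²]`. -/
noncomputable def TK (n : ℕ) (K : AddSubgroup (ZMod n × ZMod n)) :
    AddMonoidAlgebra ℚ (ZMod n × ZMod n) :=
  AddMonoidAlgebra.ofCoeff ((Nat.card K : ℚ)⁻¹ •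
    ∑ᶠ θ ∈ (K : Set (ZMod n × ZMod n)), Finsupp.single θ (1 : ℚ))

/-- The `k`-torsion subgroup `{x ∈ Z_n² : k • x = 0}`. -/
def torsionSub (n k : ℕ) : AddSubgroup (ZMod n × ZMod n) where
  carrier := {x | k • x = 0}
  zero_mem' := smul_zero k
  add_mem' := by
    intro a b ha hb
    simp only [Set.mem_setOf_eq, smul_add] at *
    rw [ha, hb, add_zero]
  neg_mem' := by
    intro a ha
    simp only [Set.mem_setOf_eq, smul_neg] at *
    rw [ha, neg_zero]

/-- `T_k := T_K` for `K` the `k`-torsion subgroup of `Z_n²`. -/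
noncomputable def Tk (n k : ℕ) : AddMonoidAlgebra ℚ (ZMod n × ZMod n) :=
  TK n (torsionSub n k)

/-! The SL₂(ℤ)-orbits on `(ℤ/n)²` are exactly the classes of elements of equal additive order:
two Bézout steps move any vector to `(g, 0)` with `g ∣ n`, and then `g = n / order`. So the
invariant elements are those whose coefficients depend only on the order, i.e. the span of the
order-class sums. The `k`-torsion sum is the sum of the order-class sums over `d ∣ k`, so by
Möbius inversion both families span the same space, and `T_k` is a nonzero multiple of the
`k`-torsion sum. -/

open Finset ArithmeticFunction
open scoped ArithmeticFunction.Moebius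

namespace AddMonoidAlgebra

section OrderClasses

variable (R : Type*) {G : Type*} [Ring R] [AddMonoid G] [Fintype G] [DecidableEq G]

def torsionSum (k : ℕ) : AddMonoidAlgebra R G := ∑ θ with k • θ = 0, single θ 1

def addOrderSum (d : ℕ) : AddMonoidAlgebra R G := ∑ θ with addOrderOf θ = d, single θ 1

variable {R}

theorem coeff_torsionSum_apply (k : ℕ) (x : G) :
    (torsionSum R k).coeff x = if addOrderOf x ∣ k then 1 else 0 := by
  simp [torsionSum, coeff_sum, coeff_single, Finsupp.finsetSum_apply, Finsupp.single_apply,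
    addOrderOf_dvd_iff_nsmul_eq_zero]

theorem torsionSum_eq_sum_addOrderSum {k : ℕ} (hk : k ≠ 0) :
    torsionSum R (G := G) k = ∑ d ∈ k.divisors, addOrderSum R d := by
  rw [torsionSum, ← sum_fiberwise_of_maps_to (g := addOrderOf) (t := k.divisors)]
  · refine sum_congr rfl fun d hd => sum_congr ?_ fun _ _ => rfl
    rw [filter_filter]
    refine filter_congr fun θ _ => ?_
    rw [← addOrderOf_dvd_iff_nsmul_eq_zero]
    exact and_iff_right_of_imp fun h => h ▸ Nat.dvd_of_mem_divisors hd
  · intro θ hθ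
    exact Nat.mem_divisors.2 ⟨addOrderOf_dvd_of_nsmul_eq_zero (mem_filter.1 hθ).2, hk⟩

theorem addOrderSum_eq_sum_moebius_smul {d : ℕ} (hd : 0 < d) :
    addOrderSum R (G := G) d = ∑ x ∈ d.divisorsAntidiagonal, μ x.1 • torsionSum R x.2 :=
  (sum_eq_iff_sum_smul_moebius_eq.1
    (fun _ hk => (torsionSum_eq_sum_addOrderSum hk.ne').symm) d hd).symm

theorem addOrderSum_mem_span_torsionSum {n d : ℕ} (hd : 0 < d) (hdn : d ∣ n) :
    addOrderSum R d ∈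
      Submodule.span R {x : AddMonoidAlgebra R G | ∃ k, k ∣ n ∧ x = torsionSum R k} := by
  rw [addOrderSum_eq_sum_moebius_smul hd]
  refine Submodule.sum_mem _ fun x hx => zsmul_mem (Submodule.subset_span ?_) _
  exact ⟨x.2, (Dvd.intro_left _ (Nat.mem_divisorsAntidiagonal.1 hx).1).trans hdn, rfl⟩

end OrderClasses

section Classification

variable {R : Type*} {G : Type*} [Ring R] [AddLeftCancelMonoid G] [Fintype G] [DecidableEq G]

theorem mem_span_torsionSum_iff {n : ℕ} (hG : ∀ x : G, n • x = 0) (v : AddMonoidAlgebra R G) :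
    v ∈ Submodule.span R {x | ∃ k, k ∣ n ∧ x = torsionSum R k} ↔
      ∀ x y, addOrderOf x = addOrderOf y → v.coeff x = v.coeff y := by
  constructor
  · intro hv
    induction hv using Submodule.span_induction with
    | mem w hw =>
      obtain ⟨k, -, rfl⟩ := hw
      intro x y h
      simp only [coeff_torsionSum_apply, h]
    | zero => simp
    | add w w' _ _ hw hw' =>
      intro x y h
      simp only [coeff_add, Finsupp.add_apply, hw x y h, hw' x y h]
    | smul c w _ hw =>
      intro x y h
      simp only [coeff_smul, Finsupp.smul_apply, hw x y h]
  · intro hv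
    have hv_sum : v = ∑ d ∈ (univ : Finset G).image addOrderOf,
        ∑ θ with addOrderOf θ = d, single θ (v.coeff θ) := by
      rw [sum_fiberwise_of_maps_to fun θ _ => mem_image_of_mem _ (mem_univ θ)]
      apply coeff_injective
      simp [coeff_sum, coeff_single]
    rw [hv_sum]
    refine Submodule.sum_mem _ fun d hd => ?_
    obtain ⟨θ₀, -, rfl⟩ := mem_image.1 hd
    have hclass : ∑ θ with addOrderOf θ = addOrderOf θ₀, single θ (v.coeff θ) =
        v.coeff θ₀ • addOrderSum R (addOrderOf θ₀) := by
      rw [addOrderSum, smul_sum]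
      refine sum_congr rfl fun θ hθ => ?_
      rw [hv θ θ₀ (mem_filter.1 hθ).2, smul_single, smul_eq_mul, mul_one]
    rw [hclass]
    exact Submodule.smul_mem _ _ <| addOrderSum_mem_span_torsionSum (addOrderOf_pos θ₀)
      (addOrderOf_dvd_of_nsmul_eq_zero (hG θ₀))

end Classification

end AddMonoidAlgebra

theorem Finsupp.mapDomain_eq_self_iff {α M : Type*} [AddCommMonoid M] {f : α → α}
    (hf : f.Bijective) (v : α →₀ M) : mapDomain f v = v ↔ ∀ x, v (f x) = v x := by
  constructor
  · intro h x
    simpa [h] using mapDomain_apply hf.1 v x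
  · intro h
    ext y
    obtain ⟨x, rfl⟩ := hf.2 y
    rw [mapDomain_apply hf.1, h]

theorem Int.exists_sl2_eq_gcd (a b : ℤ) : ∃ A : Matrix.SpecialLinearGroup (Fin 2) ℤ,
    A.1 0 0 * a + A.1 0 1 * b = Int.gcd a b ∧ A.1 1 0 * a + A.1 1 1 * b = 0 := by
  by_cases hab : a = 0 ∧ b = 0
  · exact ⟨1, by simp [hab.1, hab.2]⟩
  have hg : (Int.gcd a b : ℤ) ≠ 0 := Nat.cast_ne_zero.2 fun h => hab (Int.gcd_eq_zero_iff.1 h)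
  obtain ⟨a', ha⟩ := Int.gcd_dvd_left a b
  obtain ⟨b', hb⟩ := Int.gcd_dvd_right a b
  have hbezout : (Int.gcd a b : ℤ) = a * Int.gcdA a b + b * Int.gcdB a b := Int.gcd_eq_gcd_ab a b
  have hunit : Int.gcdA a b * a' + Int.gcdB a b * b' = 1 := by
    refine mul_left_cancel₀ hg ?_
    linear_combination (-hbezout) - Int.gcdA a b * ha - Int.gcdB a b * hb
  refine ⟨⟨!![Int.gcdA a b, Int.gcdB a b; -b', a'], ?_⟩, ?_, ?_⟩
  · rw [Matrix.det_fin_two_of]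
    linear_combination hunit
  · change Int.gcdA a b * a + Int.gcdB a b * b = _
    linear_combination -hbezout
  · change -b' * a + a' * b = 0
    linear_combination a' * hb - b' * ha

section SL2Action

variable {n : ℕ}

theorem sl2Hom_mul (A B : Matrix.SpecialLinearGroup (Fin 2) ℤ) (x : ZMod n × ZMod n) :
    sl2Hom n (A * B) x = sl2Hom n A (sl2Hom n B x) := by
  simp only [sl2Hom, AddMonoidHom.coe_mk, ZeroHom.coe_mk, Matrix.SpecialLinearGroup.coe_mul,
    Matrix.mul_apply, Fin.sum_univ_two, Prod.mk.injEq]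
  constructor <;> push_cast <;> ring

theorem sl2Hom_one (x : ZMod n × ZMod n) : sl2Hom n 1 x = x := by
  simp [sl2Hom]

theorem sl2Hom_bijective (A : Matrix.SpecialLinearGroup (Fin 2) ℤ) :
    Function.Bijective (sl2Hom n A) :=
  Function.bijective_iff_has_inverse.2 ⟨sl2Hom n A⁻¹,
    fun x => by rw [← sl2Hom_mul, inv_mul_cancel, sl2Hom_one],
    fun x => by rw [← sl2Hom_mul, mul_inv_cancel, sl2Hom_one]⟩

theorem sl2Hom_intCast (A : Matrix.SpecialLinearGroup (Fin 2) ℤ) (a b : ℤ) :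
    sl2Hom n A ((a : ZMod n), (b : ZMod n)) =
      (((A.1 0 0 * a + A.1 0 1 * b : ℤ) : ZMod n),
        ((A.1 1 0 * a + A.1 1 1 * b : ℤ) : ZMod n)) := by
  simp only [sl2Hom, AddMonoidHom.coe_mk, ZeroHom.coe_mk, Int.cast_add, Int.cast_mul]

theorem addOrderOf_sl2Hom (A : Matrix.SpecialLinearGroup (Fin 2) ℤ) (x : ZMod n × ZMod n) :
    addOrderOf (sl2Hom n A x) = addOrderOf x :=
  addOrderOf_injective _ (sl2Hom_bijective A).1 x

theorem exists_sl2Hom_eq_divisor (x : ZMod n × ZMod n) :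
    ∃ A, ∃ g : ℕ, g ∣ n ∧ sl2Hom n A x = ((g : ZMod n), 0) := by
  obtain ⟨a, ha⟩ := ZMod.intCast_surjective x.1
  obtain ⟨b, hb⟩ := ZMod.intCast_surjective x.2
  obtain ⟨A, hA₁, hA₂⟩ := Int.exists_sl2_eq_gcd a b
  obtain ⟨B, hB₁, hB₂⟩ := Int.exists_sl2_eq_gcd (Int.gcd a b) n
  refine ⟨B * A, Int.gcd (Int.gcd a b) n, Int.natCast_dvd_natCast.1 (Int.gcd_dvd_right _ _), ?_⟩
  have hx : x = ((a : ZMod n), (b : ZMod n)) := Prod.ext ha.symm hb.symm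
  -- `(g, 0) = (g, n)` in `(ℤ/n)²`, so a second Bézout step replaces `g` by `gcd g n`.
  have hzero : ((0 : ℤ) : ZMod n) = ((n : ℤ) : ZMod n) := by simp
  rw [hx, sl2Hom_mul, sl2Hom_intCast, hA₁, hA₂, hzero, sl2Hom_intCast, hB₁, hB₂]
  simp

theorem addOrderOf_divisor_zero [NeZero n] {g : ℕ} (hg : g ∣ n) :
    addOrderOf ((g : ZMod n), (0 : ZMod n)) = n / g := by
  rw [Prod.addOrderOf_mk, addOrderOf_zero, Nat.lcm_one_right,
    ZMod.addOrderOf_coe _ (NeZero.ne n), Nat.gcd_eq_right hg]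

theorem exists_sl2Hom_eq_of_addOrderOf_eq [NeZero n] {x y : ZMod n × ZMod n}
    (h : addOrderOf x = addOrderOf y) : ∃ A, sl2Hom n A x = y := by
  obtain ⟨A, g, hg, hA⟩ := exists_sl2Hom_eq_divisor x
  obtain ⟨B, g', hg', hB⟩ := exists_sl2Hom_eq_divisor y
  have hx : addOrderOf x = n / g := by
    rw [← addOrderOf_sl2Hom A, hA, addOrderOf_divisor_zero hg]
  have hy : addOrderOf y = n / g' := by
    rw [← addOrderOf_sl2Hom B, hB, addOrderOf_divisor_zero hg']
  obtain rfl : g = g' := by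
    rw [← Nat.div_div_self hg (NeZero.ne n), ← hx, h, hy, Nat.div_div_self hg' (NeZero.ne n)]
  exact ⟨B⁻¹ * A, by rw [sl2Hom_mul, hA, ← hB, ← sl2Hom_mul, inv_mul_cancel, sl2Hom_one]⟩

theorem mapDomain_sl2Hom_eq_self_iff [NeZero n] {M : Type*} [AddCommMonoid M]
    (v : (ZMod n × ZMod n) →₀ M) :
    (∀ A, Finsupp.mapDomain (sl2Hom n A) v = v) ↔
      ∀ x y, addOrderOf x = addOrderOf y → v x = v y := by
  simp only [Finsupp.mapDomain_eq_self_iff (sl2Hom_bijective _)]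
  constructor
  · intro h x y hxy
    obtain ⟨A, rfl⟩ := exists_sl2Hom_eq_of_addOrderOf_eq hxy.symm
    exact h A y
  · exact fun h A x => h _ _ (addOrderOf_sl2Hom A x)

open AddMonoidAlgebra

theorem Tk_eq_inv_card_smul_torsionSum [NeZero n] (k : ℕ) :
    Tk n k = (Nat.card (torsionSub n k) : ℚ)⁻¹ • torsionSum ℚ k := by
  have hK : (torsionSub n k : Set (ZMod n × ZMod n)) =
      ↑(univ.filter fun θ : ZMod n × ZMod n => k • θ = 0) := by
    ext θ
    simp [torsionSub]
  apply coeff_injective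
  rw [Tk, TK, coeff_ofCoeff, hK, finsum_mem_coe_finset, torsionSum, coeff_smul, coeff_sum]
  rfl

theorem span_Tk_eq_span_torsionSum [NeZero n] :
    Submodule.span ℚ {x | ∃ k, k ∣ n ∧ x = Tk n k} =
      Submodule.span ℚ {x | ∃ k, k ∣ n ∧ x = torsionSum ℚ k} := by
  have hcard (k : ℕ) : (Nat.card (torsionSub n k) : ℚ) ≠ 0 := Nat.cast_ne_zero.2 Nat.card_pos.ne'
  apply le_antisymm <;> refine Submodule.span_le.2 ?_ <;> rintro _ ⟨k, hk, rfl⟩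
  · rw [Tk_eq_inv_card_smul_torsionSum]
    exact Submodule.smul_mem _ _ (Submodule.subset_span ⟨k, hk, rfl⟩)
  · rw [← smul_inv_smul₀ (hcard k) (torsionSum ℚ k), ← Tk_eq_inv_card_smul_torsionSum]
    exact Submodule.smul_mem _ _ (Submodule.subset_span ⟨k, hk, rfl⟩)

end SL2Action

/-- An element `v` of the group algebra `ℚ[Z_n²]` is invariant under every
`A ∈ SL₂(ℤ)` if and only if it lies in the ℚ-linear span of `{T_k : k ∣ n}`. -/
theorem statement11 (n : ℕ) (hn : 1 ≤ n)
    (v : AddMonoidAlgebra ℚ (ZMod n × ZMod n)) :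
    (∀ A : Matrix.SpecialLinearGroup (Fin 2) ℤ,
        Finsupp.mapDomain (sl2Hom n A) v.coeff = v.coeff) ↔
      v ∈ Submodule.span ℚ
        {x : AddMonoidAlgebra ℚ (ZMod n × ZMod n) | ∃ k, k ∣ n ∧ x = Tk n k} := by
  have : NeZero n := ⟨by omega⟩
  rw [mapDomain_sl2Hom_eq_self_iff, span_Tk_eq_span_torsionSum,
    AddMonoidAlgebra.mem_span_torsionSum_iff fun x => by ext <;> simp]

end
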